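/- Let n ≥ 2, let A ∈ ℝ^{n×n} be sum-symmetric with row sums r_j = Σ_i A_{ji} (equal to the column sums), let D be the diagonal matrix with D_{jj} = r_j, and set M := D − A. Then for every real s ≥ cot(π/n) and every z ∈ ℂⁿ, one has z† ( s(M + Mᵀ) + i(M − Mᵀ) ) z ≥ 0; in particular the asymmetry index of D − A is at most cot(π/n). -/

import Mathlib

/-!
By sum-symmetry, `z† K_s(D − A) z = ∑ A_jk (s|z_j|² + s|z_k|² − 2 Re((s + i) z̄_j z_k))`.
A nonnegative sum-symmetric matrix is a nonnegative combination of matrices of closed walks of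
length at most `n` (subtract the largest multiple of a closed walk along positive entries and
induct on the support), so it suffices to treat one closed walk `w : ℤ/ℓ → ℂ` with `ℓ ≤ n`.
There the form is circulant: the discrete Fourier transform diagonalises it, with eigenvalues
proportional to `s (1 − cos θ) + sin θ = 2 sin φ (s sin φ + cos φ)` for `θ = 2φ = 2πk/ℓ`,
and `cot(π/n) sin φ + cos φ = sin(φ + π/n) / sin(π/n) ≥ 0` because `φ ≤ π − π/n`.
-/

open Matrix Complex ComplexOrder

/-- The Hermitian matrix `K_s(M) = s (M + Mᵀ) + i (M − Mᵀ)` associated with a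
real square matrix `M` and a real parameter `s`. -/
noncomputable def Kmat {ι : Type*} [Fintype ι] (M : Matrix ι ι ℝ) (s : ℝ) :
    Matrix ι ι ℂ :=
  (s : ℂ) • ((M + Mᵀ).map Complex.ofReal) + Complex.I • ((M - Mᵀ).map Complex.ofReal)

open Finset ComplexConjugate ZMod

lemma star_dotProduct_Kmat_mulVec {ι : Type*} [Fintype ι] (M : Matrix ι ι ℝ) (s : ℝ)
    (z : ι → ℂ) :
    star z ⬝ᵥ Kmat M s *ᵥ z = ↑(2 * ∑ j, ∑ k, M j k * ((s + I) * (conj (z j) * z k)).re) := by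
  set y : ι → ι → ℂ := fun j k => (s + I) * (conj (z j) * z k)
  have hy : ∀ j k, conj (y k j) = (s - I) * (conj (z j) * z k) := fun j k => by
    simp only [y, map_mul, map_add, Complex.conj_ofReal, Complex.conj_I, conj_conj]; ring
  calc star z ⬝ᵥ Kmat M s *ᵥ z
      = ∑ j, ∑ k, (M j k * y j k + M k j * conj (y k j)) := by
        simp only [dotProduct, mulVec, mul_sum, hy, y, Kmat]
        refine sum_congr rfl fun j _ => sum_congr rfl fun k _ => ?_
        simp only [Pi.star_apply, RCLike.star_def, Matrix.add_apply, Matrix.sub_apply,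
          Matrix.smul_apply, map_apply, transpose_apply, smul_eq_mul]
        push_cast; ring
    _ = ∑ j, ∑ k, M j k * (y j k + conj (y j k)) := by
        simp only [sum_add_distrib, mul_add]
        rw [sum_comm (f := fun j k => (M k j : ℂ) * conj (y k j))]
    _ = _ := by
        simp only [add_conj, y]; push_cast
        simp only [mul_sum]
        refine sum_congr rfl fun j _ => sum_congr rfl fun k _ => by ring

lemma two_mul_sum_laplacian_mul {ι : Type*} [Fintype ι] [DecidableEq ι] (A : Matrix ι ι ℝ)
    (hsum : ∀ j, ∑ i, A j i = ∑ i, A i j) (φ : ι → ι → ℝ) :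
    2 * ∑ j, ∑ k, (diagonal (fun j => ∑ i, A j i) - A) j k * φ j k
      = ∑ j, ∑ k, A j k * (φ j j + φ k k - 2 * φ j k) := by
  have hrow : ∑ j, ∑ k, diagonal (fun j => ∑ i, A j i) j k * φ j k
      = ∑ j, ∑ k, A j k * φ j j := by
    simp [diagonal_apply, ite_mul, sum_mul]
  have hcol : ∑ j, ∑ k, diagonal (fun j => ∑ i, A j i) j k * φ j k
      = ∑ j, ∑ k, A j k * φ k k := by
    simp only [diagonal_apply, ite_mul, zero_mul, sum_ite_eq, mem_univ, if_true, hsum, sum_mul]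
    exact sum_comm
  simp only [Matrix.sub_apply, sub_mul, sum_sub_distrib, mul_sub, mul_add, sum_add_distrib]
  nth_rw 1 [two_mul, hrow, hcol]
  simp only [mul_sum, mul_left_comm (2 : ℝ)]

lemma mul_one_sub_cos_add_sin_nonneg {n : ℕ} (hn : 2 ≤ n) {s : ℝ}
    (hs : Real.cot (Real.pi / n) ≤ s) {θ : ℝ} (h0 : 0 ≤ θ)
    (h1 : θ ≤ 2 * (Real.pi - Real.pi / n)) :
    0 ≤ s * (1 - Real.cos θ) + Real.sin θ := by
  obtain ⟨φ, rfl⟩ : ∃ φ, θ = 2 * φ := ⟨θ / 2, by ring⟩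
  have hπn : 0 < Real.pi / n := by positivity
  have hπn' : Real.pi / n < Real.pi :=
    div_lt_self Real.pi_pos (by exact_mod_cast hn)
  have hsin : 0 ≤ Real.sin φ :=
    Real.sin_nonneg_of_nonneg_of_le_pi (by linarith) (by linarith)
  have hcot : 0 ≤ Real.cot (Real.pi / n) * Real.sin φ + Real.cos φ := by
    have hpos := Real.sin_pos_of_pos_of_lt_pi hπn hπn'
    have : Real.cot (Real.pi / n) * Real.sin φ + Real.cos φ
        = Real.sin (φ + Real.pi / n) / Real.sin (Real.pi / n) := by
      rw [Real.sin_add, Real.cot_eq_cos_div_sin]; field_simp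
    rw [this]
    exact div_nonneg (Real.sin_nonneg_of_nonneg_of_le_pi (by linarith) (by linarith)) hpos.le
  have hhalf : s * (1 - Real.cos (2 * φ)) + Real.sin (2 * φ)
      = 2 * Real.sin φ * (s * Real.sin φ + Real.cos φ) := by
    rw [Real.cos_two_mul', Real.sin_two_mul]
    linear_combination (-s) * Real.sin_sq_add_cos_sq φ
  rw [hhalf]
  nlinarith [mul_le_mul_of_nonneg_right hs hsin]

lemma sum_stdAddChar_mul_normSq_dft {ℓ : ℕ} [NeZero ℓ] (w : ZMod ℓ → ℂ) (t : ZMod ℓ) :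
    ∑ k, stdAddChar (t * k) * (normSq (𝓕 w k) : ℂ) = ℓ * ∑ a, conj (w a) * w (a + t) := by
  have hconj : ∀ k, conj (𝓕 w k) = ∑ a, stdAddChar (a * k) * conj (w a) := fun k => by
    simp [dft_apply, map_sum, ← AddChar.map_neg_eq_conj]
  calc ∑ k, stdAddChar (t * k) * (normSq (𝓕 w k) : ℂ)
      = ∑ b, ∑ a, (∑ k, stdAddChar (k * (t + a - b))) * (conj (w a) * w b) := by
        simp only [normSq_eq_conj_mul_self, hconj]
        simp only [dft_apply, smul_eq_mul, sum_mul, mul_sum]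
        rw [sum_comm]
        refine sum_congr rfl fun b _ => ?_
        rw [sum_comm]
        refine sum_congr rfl fun a _ => sum_congr rfl fun k _ => ?_
        rw [show k * (t + a - b) = t * k + (a * k + -(b * k)) by ring,
          AddChar.map_add_eq_mul, AddChar.map_add_eq_mul]
        ring
    _ = ℓ * ∑ a, conj (w a) * w (a + t) := by
        rw [sum_comm]
        simp only [AddChar.sum_mulShift _ (isPrimitive_stdAddChar ℓ), ZMod.card, mul_sum]
        refine sum_congr rfl fun a _ => ?_
        rw [sum_eq_single (a + t) (fun b _ hb => ?_) (by simp)]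
        · simp [add_comm]
        · rw [if_neg (by rwa [sub_eq_zero, add_comm, eq_comm]), Nat.cast_zero, zero_mul]

lemma stdAddChar_eq_exp {ℓ : ℕ} [NeZero ℓ] (k : ZMod ℓ) :
    stdAddChar k = exp (↑(2 * Real.pi * k.val / ℓ) * I) := by
  rw [stdAddChar_apply, toCircle_apply]; push_cast; ring_nf

lemma re_stdAddChar {ℓ : ℕ} [NeZero ℓ] (k : ZMod ℓ) :
    (stdAddChar k).re = Real.cos (2 * Real.pi * k.val / ℓ) := by
  rw [stdAddChar_eq_exp, exp_ofReal_mul_I_re]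

lemma im_stdAddChar {ℓ : ℕ} [NeZero ℓ] (k : ZMod ℓ) :
    (stdAddChar k).im = Real.sin (2 * Real.pi * k.val / ℓ) := by
  rw [stdAddChar_eq_exp, exp_ofReal_mul_I_im]

lemma sum_re_mul_conj_mul_add_one_le {n ℓ : ℕ} [NeZero ℓ] (hn : 2 ≤ n) (hℓn : ℓ ≤ n) {s : ℝ}
    (hs : Real.cot (Real.pi / n) ≤ s) (w : ZMod ℓ → ℂ) :
    ∑ a, ((s + I) * (conj (w a) * w (a + 1))).re ≤ s * ∑ a, normSq (w a) := by
  set θ : ZMod ℓ → ℝ := fun k => 2 * Real.pi * k.val / ℓ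
  have hℓ : (0 : ℝ) < ℓ := by exact_mod_cast Nat.pos_of_ne_zero (NeZero.ne ℓ)
  have hparseval : ∑ k, normSq (𝓕 w k) = ℓ * ∑ a, normSq (w a) := by
    have h := congrArg re (sum_stdAddChar_mul_normSq_dft w 0)
    simpa [← normSq_eq_conj_mul_self, re_sum] using h
  have hshift : ∑ k, (s * Real.cos (θ k) - Real.sin (θ k)) * normSq (𝓕 w k)
      = ℓ * ∑ a, ((s + I) * (conj (w a) * w (a + 1))).re := by
    have h := congrArg (fun x => ((s + I) * x).re) (sum_stdAddChar_mul_normSq_dft w 1)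
    simp only [one_mul, mul_sum, re_sum] at h
    rw [mul_sum]
    convert h using 2 with k
    · rw [← mul_assoc, re_mul_ofReal, mul_re, re_stdAddChar, im_stdAddChar]
      simp only [add_re, add_im, ofReal_re, ofReal_im, I_re, I_im, add_zero, zero_add, one_mul, θ]
    · rw [← ofReal_natCast, mul_left_comm _ ((ℓ : ℝ) : ℂ), re_ofReal_mul]
  have hspec : ∀ k, 0 ≤ s * (1 - Real.cos (θ k)) + Real.sin (θ k) := fun k => by
    refine mul_one_sub_cos_add_sin_nonneg hn hs (by positivity) ?_
    have hk : 1 ≤ (ℓ : ℝ) - k.val := by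
      have := ZMod.val_lt k
      rw [le_sub_iff_add_le']; exact_mod_cast this
    calc θ k = 2 * (Real.pi - Real.pi * (ℓ - k.val) / ℓ) := by simp only [θ]; field_simp; ring
      _ ≤ 2 * (Real.pi - Real.pi / ℓ) := by gcongr; exact le_mul_of_one_le_right Real.pi_pos.le hk
      _ ≤ 2 * (Real.pi - Real.pi / n) := by gcongr
  have : 0 ≤ (ℓ : ℝ) * (s * ∑ a, normSq (w a) - ∑ a, ((s + I) * (conj (w a) * w (a + 1))).re) := by
    rw [mul_sub, mul_left_comm, ← hparseval, ← hshift, mul_sum, ← sum_sub_distrib]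
    exact sum_nonneg fun k _ => by nlinarith [hspec k, normSq_nonneg (𝓕 w k)]
  nlinarith

section Cycles

variable {ι : Type*} [DecidableEq ι]

def cycleMatrix {ℓ : ℕ} [NeZero ℓ] (c : ZMod ℓ → ι) : Matrix ι ι ℝ :=
  ∑ i, single (c i) (c (i + 1)) 1

variable {ℓ : ℕ} [NeZero ℓ] (c : ZMod ℓ → ι)

lemma cycleMatrix_apply (j k : ι) :
    cycleMatrix c j k = ∑ i, if c i = j ∧ c (i + 1) = k then 1 else 0 := by
  simp [cycleMatrix, Matrix.sum_apply, single_apply]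

lemma exists_of_cycleMatrix_ne_zero {j k : ι} (h : cycleMatrix c j k ≠ 0) :
    ∃ i, c i = j ∧ c (i + 1) = k := by
  rw [cycleMatrix_apply] at h
  by_contra! hc
  exact h (sum_eq_zero fun i _ => if_neg fun hi => hc i hi.1 hi.2)

lemma cycleMatrix_pos (i : ZMod ℓ) : 0 < cycleMatrix c (c i) (c (i + 1)) := by
  rw [cycleMatrix_apply]
  exact sum_pos' (fun _ _ => by positivity) ⟨i, mem_univ i, by simp⟩

variable [Fintype ι]

lemma sum_cycleMatrix_mul (g : ι → ι → ℝ) :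
    ∑ j, ∑ k, cycleMatrix c j k * g j k = ∑ i, g (c i) (c (i + 1)) := by
  calc ∑ j, ∑ k, cycleMatrix c j k * g j k
      = ∑ j, ∑ k, ∑ i, if c i = j ∧ c (i + 1) = k then g j k else 0 := by
        simp only [cycleMatrix_apply, sum_mul, ite_mul, one_mul, zero_mul]
    _ = ∑ i, ∑ j, ∑ k, if c i = j ∧ c (i + 1) = k then g j k else 0 :=
        (sum_congr rfl fun _ _ => sum_comm).trans sum_comm
    _ = ∑ i, g (c i) (c (i + 1)) := by simp [ite_and]

lemma sum_cycleMatrix_row_eq_col (j : ι) :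
    ∑ k, cycleMatrix c j k = ∑ k, cycleMatrix c k j := by
  have hrow : ∑ k, cycleMatrix c j k = ∑ i, if c i = j then 1 else 0 := by
    simp only [cycleMatrix_apply]; rw [sum_comm]; simp [ite_and]
  have hcol : ∑ k, cycleMatrix c k j = ∑ i, if c (i + 1) = j then 1 else 0 := by
    simp only [cycleMatrix_apply]; rw [sum_comm]; simp [ite_and]
  rw [hrow, hcol]
  exact (Fintype.sum_equiv (Equiv.addRight 1) _ _ fun _ => rfl).symm

end Cycles

lemma exists_closed_walk {ι : Type*} [Fintype ι] {R : ι → ι → Prop} {S : Set ι}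
    (hS : S.Nonempty) (hsucc : ∀ j ∈ S, ∃ k ∈ S, R j k) :
    ∃ ℓ < Fintype.card ι, ∃ c : ZMod (ℓ + 1) → ι, ∀ i, R (c i) (c (i + 1)) := by
  choose! g hgS hgR using hsucc
  obtain ⟨x, hx⟩ := hS
  set f : ℕ → ι := fun m => g^[m] x
  have hf : ∀ m, f (m + 1) = g (f m) := fun m => Function.iterate_succ_apply' g m x
  have hfS : ∀ m, f m ∈ S := fun m => by
    induction m with
    | zero => exact hx
    | succ m ih => rw [hf]; exact hgS _ ih
  have hfR : ∀ m, R (f m) (f (m + 1)) := fun m => by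
    rw [hf]; exact hgR _ (hfS m)
  obtain ⟨a, b, hab, heq⟩ :=
    Fintype.exists_ne_map_eq_of_card_lt (fun m : Fin (Fintype.card ι + 1) => f m) (by simp)
  wlog hlt : a < b generalizing a b
  · exact this b a hab.symm heq.symm (lt_of_le_of_ne (not_lt.1 hlt) hab.symm)
  refine ⟨b - a - 1, by omega, fun i => f (a + i.val), fun i => ?_⟩
  have hval : (i + 1).val = (i.val + 1) % (b - a - 1 + 1) := by
    rw [ZMod.val_add, ZMod.val_one_eq_one_mod, Nat.add_mod_mod]
  have hi := ZMod.val_lt i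
  show R (f (a + i.val)) (f (a + (i + 1).val))
  rcases Nat.lt_or_ge (i.val + 1) (b - a - 1 + 1) with h | h
  · rw [hval, Nat.mod_eq_of_lt h, ← add_assoc]; exact hfR _
  · rw [hval, show i.val + 1 = b - a - 1 + 1 by omega, Nat.mod_self, add_zero]
    have hb : (a + i.val + 1 : ℕ) = b := by omega
    have := hfR (a + i.val)
    rwa [hb, ← heq] at this

section Decomposition

variable {ι : Type*} [Fintype ι] {B : Matrix ι ι ℝ}

lemma exists_cycle_of_pos (hB : ∀ j k, 0 ≤ B j k) (hsum : ∀ j, ∑ k, B j k = ∑ k, B k j)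
    {j₀ k₀ : ι} (h : 0 < B j₀ k₀) :
    ∃ ℓ < Fintype.card ι, ∃ c : ZMod (ℓ + 1) → ι, ∀ i, 0 < B (c i) (c (i + 1)) := by
  refine exists_closed_walk (R := fun j k => 0 < B j k) (S := {k | ∃ j, 0 < B j k}) ⟨k₀, j₀, h⟩ ?_
  rintro j ⟨i, hij⟩
  have hout : ∑ _k : ι, (0 : ℝ) < ∑ k, B j k := by
    rw [sum_const_zero, hsum]; exact sum_pos' (fun k _ => hB k j) ⟨i, mem_univ _, hij⟩
  obtain ⟨k, -, hk⟩ := exists_lt_of_sum_lt hout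
  exact ⟨k, ⟨j, hk⟩, hk⟩

variable [DecidableEq ι]

lemma exists_sub_smul_cycleMatrix {ℓ : ℕ} [NeZero ℓ] {c : ZMod ℓ → ι}
    (hB : ∀ j k, 0 ≤ B j k) (hc : ∀ i, 0 < B (c i) (c (i + 1))) :
    ∃ ε : ℝ, 0 < ε ∧ (∀ j k, 0 ≤ (B - ε • cycleMatrix c) j k) ∧
      #{p : ι × ι | (B - ε • cycleMatrix c) p.1 p.2 ≠ 0} < #{p : ι × ι | B p.1 p.2 ≠ 0} := by
  obtain ⟨i₀, hmin⟩ :=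
    Finite.exists_min fun i => B (c i) (c (i + 1)) / cycleMatrix c (c i) (c (i + 1))
  -- the largest multiple of the walk matrix that fits under `B`; it empties the entry at `i₀`
  set ε := B (c i₀) (c (i₀ + 1)) / cycleMatrix c (c i₀) (c (i₀ + 1))
  have hle : ∀ j k, ε * cycleMatrix c j k ≤ B j k := fun j k => by
    by_cases h : cycleMatrix c j k = 0
    · simpa [h] using hB j k
    obtain ⟨i, rfl, rfl⟩ := exists_of_cycleMatrix_ne_zero c h
    exact (le_div_iff₀ (cycleMatrix_pos c i)).1 (hmin i)
  have hsub : ({p : ι × ι | (B - ε • cycleMatrix c) p.1 p.2 ≠ 0} : Finset (ι × ι)) ⊆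
      ({p : ι × ι | B p.1 p.2 ≠ 0} : Finset (ι × ι)) := by
    intro p
    simp only [mem_filter, mem_univ, true_and]
    intro hp hBp
    refine hp ?_
    have : cycleMatrix c p.1 p.2 = 0 := by
      by_contra h
      obtain ⟨i, hi, hi'⟩ := exists_of_cycleMatrix_ne_zero c h
      exact (hc i).ne' (hi ▸ hi' ▸ hBp)
    simp [hBp, this]
  refine ⟨ε, div_pos (hc i₀) (cycleMatrix_pos c i₀), fun j k => ?_, card_lt_card ?_⟩
  · simpa [sub_nonneg] using hle j k
  rw [ssubset_iff_of_subset hsub]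
  refine ⟨(c i₀, c (i₀ + 1)), by simp [(hc i₀).ne'], ?_⟩
  rw [mem_filter]
  simp only [mem_univ, true_and, not_not, Matrix.sub_apply, Matrix.smul_apply,
    smul_eq_mul, ε, div_mul_cancel₀ _ (cycleMatrix_pos c i₀).ne', sub_self]

theorem sum_mul_nonneg_of_cycle_sum_nonneg {g : ι → ι → ℝ}
    (hg : ∀ ℓ < Fintype.card ι, ∀ c : ZMod (ℓ + 1) → ι, 0 ≤ ∑ i, g (c i) (c (i + 1)))
    (hB : ∀ j k, 0 ≤ B j k) (hsum : ∀ j, ∑ k, B j k = ∑ k, B k j) :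
    0 ≤ ∑ j, ∑ k, B j k * g j k := by
  induction hm : #{p : ι × ι | B p.1 p.2 ≠ 0} using Nat.strong_induction_on generalizing B with
  | _ m ih =>
  by_cases h0 : ∀ j k, B j k = 0
  · simp [h0]
  push Not at h0
  obtain ⟨j₀, k₀, h⟩ := h0
  obtain ⟨ℓ, hℓ, c, hc⟩ := exists_cycle_of_pos hB hsum ((hB j₀ k₀).lt_of_ne' h)
  obtain ⟨ε, hε, hB', hcard⟩ := exists_sub_smul_cycleMatrix hB hc
  have hsum' : ∀ j, ∑ k, (B - ε • cycleMatrix c) j k = ∑ k, (B - ε • cycleMatrix c) k j := by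
    intro j
    simp only [Matrix.sub_apply, Matrix.smul_apply, smul_eq_mul, sum_sub_distrib, ← mul_sum, hsum,
      sum_cycleMatrix_row_eq_col]
  calc 0 ≤ ∑ j, ∑ k, (B - ε • cycleMatrix c) j k * g j k + ε * ∑ i, g (c i) (c (i + 1)) :=
        add_nonneg (ih _ (hm ▸ hcard) hB' hsum' rfl) (mul_nonneg hε.le (hg ℓ hℓ c))
    _ = ∑ j, ∑ k, B j k * g j k := by
        rw [← sum_cycleMatrix_mul, mul_sum, ← sum_add_distrib]
        refine sum_congr rfl fun j _ => ?_
        rw [mul_sum, ← sum_add_distrib]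
        refine sum_congr rfl fun k _ => ?_
        simp only [Matrix.sub_apply, Matrix.smul_apply, smul_eq_mul]; ring

end Decomposition

theorem sum_symmetric_asymmetry_index (n : ℕ) (hn : 2 ≤ n)
    (A : Matrix (Fin n) (Fin n) ℝ)
    (hA : ∀ i j, 0 ≤ A i j)
    (hsum : ∀ j, ∑ i, A j i = ∑ i, A i j)
    (s : ℝ) (hs : Real.cot (Real.pi / n) ≤ s)
    (z : Fin n → ℂ) :
    0 ≤ star z ⬝ᵥ (Kmat (Matrix.diagonal (fun j => ∑ i, A j i) - A) s) *ᵥ z := by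
  set φ : Fin n → Fin n → ℝ := fun j k => ((s + I) * (conj (z j) * z k)).re
  have hφ : ∀ j, φ j j = s * normSq (z j) := fun j => by
    simp only [φ, ← normSq_eq_conj_mul_self, re_mul_ofReal, add_re, ofReal_re, I_re, add_zero]
  rw [star_dotProduct_Kmat_mulVec, zero_le_real, two_mul_sum_laplacian_mul A hsum φ]
  refine sum_mul_nonneg_of_cycle_sum_nonneg (fun ℓ hℓ c => ?_) hA hsum
  have hshift : ∑ i, normSq (z (c (i + 1))) = ∑ i, normSq (z (c i)) :=
    Fintype.sum_equiv (Equiv.addRight 1) _ _ fun _ => rfl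
  have hcycle := sum_re_mul_conj_mul_add_one_le hn (by simpa using hℓ) hs (z ∘ c)
  simp only [sum_sub_distrib, sum_add_distrib, hshift, hφ, ← mul_sum]
  simp only [Function.comp] at hcycle
  linarith
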